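/- arXiv:1807.07030 — 2 statements merged into one kernel-verified Lean document; each statement's English description precedes it below -/
import Mathlib

section
/- Let G be a finite simple graph and B ⊆ V(G). Then th_⌊Z⌋(G;B) = min{ th_Z(H;B) : H is a spanning supergraph of G }. -/
open SimpleGraph

namespace ZFT

variable {V : Type*} {α : Type*} {β : Type*}

/-! ### Standard zero forcing (simultaneous propagation) -/

/-- One round of simultaneous standard zero forcing: a blue vertex forces its
unique white neighbor. -/
def zStep (G : SimpleGraph V) (S : Set V) : Set V :=
  S ∪ {w | ∃ u ∈ S, G.Adj u w ∧ ∀ x, G.Adj u x → x ∉ S → x = w}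

/-- `B` is a standard zero forcing set of `G`. -/
def IsZeroForcingSet (G : SimpleGraph V) (B : Set V) : Prop :=
  ∃ t : ℕ, (zStep G)^[t] B = Set.univ

/-- The standard propagation time `pt_Z(G;B)` (`⊤` if `B` is not a zero forcing set). -/
noncomputable def ptZ (G : SimpleGraph V) (B : Set V) : ℕ∞ :=
  sInf {n : ℕ∞ | ∃ t : ℕ, n = t ∧ (zStep G)^[t] B = Set.univ}

/-- The standard throttling number `th_Z(G;B) = |B| + pt_Z(G;B)`. -/
noncomputable def thZ (G : SimpleGraph V) (B : Set V) : ℕ∞ :=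
  (B.ncard : ℕ∞) + ptZ G B

/-- The standard throttling number `th_Z(G)`. -/
noncomputable def thZgraph (G : SimpleGraph V) : ℕ∞ :=
  sInf {n : ℕ∞ | ∃ B : Set V, IsZeroForcingSet G B ∧ n = thZ G B}

/-- The standard zero forcing number `Z(G)`. -/
noncomputable def Znum (G : SimpleGraph V) : ℕ :=
  sInf {k : ℕ | ∃ B : Set V, IsZeroForcingSet G B ∧ B.ncard = k}

/-- The standard propagation time `pt_Z(G)`, minimized over minimum zero forcing sets. -/
noncomputable def ptZgraph (G : SimpleGraph V) : ℕ∞ :=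
  sInf {n : ℕ∞ | ∃ B : Set V, IsZeroForcingSet G B ∧ B.ncard = Znum G ∧ n = ptZ G B}

/-! ### Sets of standard forces -/

/-- Validity of a single standard force `u → w` when `blue` is the blue set. -/
def zForceValid (G : SimpleGraph V) (blue : Set V) (u w : V) : Prop :=
  u ∈ blue ∧ w ∉ blue ∧ G.Adj u w ∧ ∀ x, G.Adj u x → x ∉ blue → x = w

/-- Validity of a chronological list of standard forces starting from a blue set. -/
def zValidList (G : SimpleGraph V) : Set V → List (V × V) → Prop
  | _, [] => True
  | blue, p :: L => zForceValid G blue p.1 p.2 ∧ zValidList G (insert p.2 blue) L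

/-- The blue set after performing all forces in a list, starting from `B`. -/
def endBlue (B : Set V) (L : List (V × V)) : Set V :=
  B ∪ {w | ∃ u, (u, w) ∈ L}

/-- The set of vertices that have performed a force in a list. -/
def endForced (L : List (V × V)) : Set V := {u | ∃ w, (u, w) ∈ L}

/-- `F` is a set of standard forces of `B` in `G` (recorded from a maximal
chronological list of forces). -/
def IsZForceSet (G : SimpleGraph V) (B : Set V) (F : Set (V × V)) : Prop :=
  ∃ L : List (V × V), zValidList G B L ∧
    (∀ u w, ¬ zForceValid G (endBlue B L) u w) ∧ F = {p | p ∈ L}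

/-- The set of blue vertices at time `t` when the forces of `F` are performed at the
earliest possible time steps, starting from `B` blue. -/
def zBlueAt (G : SimpleGraph V) (F : Set (V × V)) (B : Set V) : ℕ → Set V
  | 0 => B
  | t + 1 =>
      zBlueAt G F B t ∪ {w | ∃ v, (v, w) ∈ F ∧ zForceValid G (zBlueAt G F B t) v w}

/-- The standard propagation time `pt_Z(G;F)` of a set of forces `F` of `B`. -/
noncomputable def ptZofF (G : SimpleGraph V) (F : Set (V × V)) (B : Set V) : ℕ∞ :=
  sInf {n : ℕ∞ | ∃ t : ℕ, n = t ∧ zBlueAt G F B t = Set.univ}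

/-! ### `⌊Z⌋` (minor monotone floor) forcing -/

/-- Validity of a single `⌊Z⌋` force `u → w`: `u` is blue and has not yet forced, `w`
is white, and either `w` is the unique white neighbor of `u`, or all neighbors of `u`
are blue (a hop). -/
def zfForceValid (G : SimpleGraph V) (blue forced : Set V) (u w : V) : Prop :=
  u ∈ blue ∧ w ∉ blue ∧ u ∉ forced ∧
    ((G.Adj u w ∧ ∀ x, G.Adj u x → x ∉ blue → x = w) ∨ ∀ x, G.Adj u x → x ∈ blue)

/-- Validity of a chronological list of `⌊Z⌋` forces. -/
def zfValidList (G : SimpleGraph V) : Set V → Set V → List (V × V) → Prop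
  | _, _, [] => True
  | blue, forced, p :: L =>
      zfForceValid G blue forced p.1 p.2 ∧
        zfValidList G (insert p.2 blue) (insert p.1 forced) L

/-- `F` is a set of `⌊Z⌋` forces of `B` in `G` (recorded from a maximal chronological
list of `⌊Z⌋` forces starting with `B` blue). -/
def IsZFForceSet (G : SimpleGraph V) (B : Set V) (F : Set (V × V)) : Prop :=
  ∃ L : List (V × V), zfValidList G B ∅ L ∧
    (∀ u w, ¬ zfForceValid G (endBlue B L) (endForced L) u w) ∧ F = {p | p ∈ L}

/-- The set of blue vertices at time `t` when the `⌊Z⌋` forces of `F` are performed at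
the earliest possible time steps, starting from `B` blue. -/
def zfBlueAt (G : SimpleGraph V) (F : Set (V × V)) (B : Set V) : ℕ → Set V
  | 0 => B
  | t + 1 =>
      zfBlueAt G F B t ∪
        {w | ∃ v, (v, w) ∈ F ∧ v ∈ zfBlueAt G F B t ∧ w ∉ zfBlueAt G F B t ∧
          (∀ w', (v, w') ∈ F → w' ∈ zfBlueAt G F B t → w' ∈ B) ∧
          ((G.Adj v w ∧ ∀ x, G.Adj v x → x ∉ zfBlueAt G F B t → x = w) ∨
            ∀ x, G.Adj v x → x ∈ zfBlueAt G F B t)}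

/-- The `⌊Z⌋` propagation time `pt_⌊Z⌋(G;F)` of a set of `⌊Z⌋` forces `F` of `B`. -/
noncomputable def ptZFofF (G : SimpleGraph V) (F : Set (V × V)) (B : Set V) : ℕ∞ :=
  sInf {n : ℕ∞ | ∃ t : ℕ, n = t ∧ zfBlueAt G F B t = Set.univ}

/-- The `⌊Z⌋` propagation time `pt_⌊Z⌋(G;B)`, minimized over sets of `⌊Z⌋` forces of `B`. -/
noncomputable def ptZF (G : SimpleGraph V) (B : Set V) : ℕ∞ :=
  sInf {n : ℕ∞ | ∃ F : Set (V × V), IsZFForceSet G B F ∧ n = ptZFofF G F B}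

/-- The `⌊Z⌋` throttling number `th_⌊Z⌋(G;B) = |B| + pt_⌊Z⌋(G;B)`. -/
noncomputable def thZF (G : SimpleGraph V) (B : Set V) : ℕ∞ :=
  (B.ncard : ℕ∞) + ptZF G B

/-- The `⌊Z⌋` throttling number `th_⌊Z⌋(G)`, minimized over all `B ⊆ V(G)`. -/
noncomputable def thZFgraph (G : SimpleGraph V) : ℕ∞ :=
  sInf {n : ℕ∞ | ∃ B : Set V, n = thZF G B}

/-- `B` is a `⌊Z⌋` forcing set of `G`. -/
def IsZFForcingSet (G : SimpleGraph V) (B : Set V) : Prop :=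
  ∃ F : Set (V × V), IsZFForceSet G B F ∧ B ∪ {w | ∃ u, (u, w) ∈ F} = Set.univ

/-- The `⌊Z⌋` forcing number `⌊Z⌋(G)`. -/
noncomputable def ZFnum (G : SimpleGraph V) : ℕ :=
  sInf {k : ℕ | ∃ B : Set V, IsZFForcingSet G B ∧ B.ncard = k}

/-- The `⌊Z⌋` propagation time `pt_⌊Z⌋(G)`, minimized over minimum `⌊Z⌋` forcing sets. -/
noncomputable def ptZFgraph (G : SimpleGraph V) : ℕ∞ :=
  sInf {n : ℕ∞ | ∃ B : Set V, IsZFForcingSet G B ∧ B.ncard = ZFnum G ∧ n = ptZF G B}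

/-! ### Contractions, minors, and products -/

/-- The graph obtained from `H` by contracting (all) the edges in `C`: its vertices are
the connected components of the spanning subgraph of `H` with edge set `C ∩ E(H)`, and
two distinct components are adjacent iff `H` has an edge between them. -/
def contractEdges (H : SimpleGraph α) (C : Set (Sym2 α)) :
    SimpleGraph (SimpleGraph.fromEdgeSet C ⊓ H).ConnectedComponent where
  Adj c d := c ≠ d ∧ ∃ a b, H.Adj a b ∧
      (SimpleGraph.fromEdgeSet C ⊓ H).connectedComponentMk a = c ∧
      (SimpleGraph.fromEdgeSet C ⊓ H).connectedComponentMk b = d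
  symm := by
    constructor
    rintro c d ⟨hcd, a, b, hab, ha, hb⟩
    exact ⟨hcd.symm, b, a, hab.symm, hb, ha⟩
  loopless := ⟨fun c h => h.1 rfl⟩

/-- `G` is a minor of `H`: `G` is isomorphic to a subgraph of a graph obtained from an
induced subgraph of `H` by contracting a set of edges. -/
def IsMinor (G : SimpleGraph β) (H : SimpleGraph α) : Prop :=
  ∃ (s : Set α) (C : Set (Sym2 s))
    (G'' : SimpleGraph (SimpleGraph.fromEdgeSet C ⊓ H.induce s).ConnectedComponent),
      G'' ≤ contractEdges (H.induce s) C ∧ Nonempty (G ≃g G'')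

/-- The Cartesian product `K_a □ P_{b+1}`. -/
def prodKP (a b : ℕ) : SimpleGraph (Fin a × Fin (b + 1)) :=
  (⊤ : SimpleGraph (Fin a)) □ SimpleGraph.pathGraph (b + 1)

/-- The path edges of `K_a □ P_{b+1}` (edges within the copies of `P_{b+1}`). -/
def pathEdges (a b : ℕ) : Set (Sym2 (Fin a × Fin (b + 1))) :=
  {e | ∃ (i : Fin a) (j j' : Fin (b + 1)),
    (SimpleGraph.pathGraph (b + 1)).Adj j j' ∧ e = s((i, j), (i, j'))}

/-- The complete edges of `K_a □ P_{b+1}` (edges within the copies of `K_a`). -/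
def completeEdges (a b : ℕ) : Set (Sym2 (Fin a × Fin (b + 1))) :=
  {e | ∃ (i i' : Fin a) (j : Fin (b + 1)), i ≠ i' ∧ e = s((i, j), (i', j))}

/-- The star `K_{1,n-1}` on `n` vertices: vertex `0` is adjacent to all others. -/
def starGraph (n : ℕ) : SimpleGraph (Fin n) where
  Adj i j := i ≠ j ∧ ((i : ℕ) = 0 ∨ (j : ℕ) = 0)
  symm := by constructor; rintro i j ⟨h1, h2⟩; exact ⟨h1.symm, h2.symm⟩
  loopless := ⟨fun i h => h.1 rfl⟩

/-- The independence number `α(G)`. -/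
noncomputable def indepNum (G : SimpleGraph V) : ℕ :=
  sSup {k : ℕ | ∃ s : Set V, (∀ a ∈ s, ∀ b ∈ s, a ≠ b → ¬ G.Adj a b) ∧ s.ncard = k}


/-! A `⌊Z⌋` force `u → w` of `G` is a standard force of `G + uw`: if it is a hop, every
`G`-neighbour of `u` is already blue. Conversely a standard force `u → w` of a spanning
supergraph `H` is a `⌊Z⌋` force of `G`, an ordinary one if `uw ∈ E(G)` and a hop otherwise.

So, given a set `F` of `⌊Z⌋` forces of `B`, the graph `G + {uw : (u, w) ∈ F}` colors at each
time step at least what `F` colors: the only new neighbours of a forcing vertex `v` are the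
vertex `v` forces and the vertex that forced `v`, which is blue already. Given a spanning
supergraph `H`, performing its simultaneous forcing rounds one force at a time in `G` yields
a set of `⌊Z⌋` forces that is just as fast; a vertex never forces twice, because after its
first force all its `H`-neighbours are blue. -/

section ForcingRules

variable {G H : SimpleGraph V} {S blue forced : Set V} {u w : V}

lemma zStep_mono (G : SimpleGraph V) : Monotone (zStep G) := by
  rintro S S' hSS' w (hw | ⟨u, hu, huw, huniq⟩)
  · exact Or.inl (hSS' hw)
  · by_cases hw' : w ∈ S'
    · exact Or.inl hw'
    · exact Or.inr ⟨u, hSS' hu, huw,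
        fun x hx hxS' => huniq x hx fun h => hxS' (hSS' h)⟩

lemma monotone_zStep_iterate (G : SimpleGraph V) (B : Set V) :
    Monotone fun s => (zStep G)^[s] B :=
  monotone_nat_of_le_succ fun s => by
    rw [Function.iterate_succ_apply']
    exact Set.subset_union_left

lemma zForceValid.mem_zStep (h : zForceValid G S u w) : w ∈ zStep G S :=
  Or.inr ⟨u, h.1, h.2.2.1, h.2.2.2⟩

lemma exists_zForceValid_of_mem_zStep (hw : w ∈ zStep G S) (hwS : w ∉ S) :
    ∃ u, zForceValid G S u w := by
  rcases hw with hw | ⟨u, hu, huw, huniq⟩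
  · exact absurd hw hwS
  · exact ⟨u, hu, hwS, huw, huniq⟩

lemma zForceValid.adj_mem_insert (h : zForceValid G S u w) {x : V} (hx : G.Adj u x) :
    x ∈ insert w S := by
  by_cases hxS : x ∈ S
  · exact Or.inr hxS
  · exact Or.inl (h.2.2.2 x hx hxS)

lemma zForceValid.forces_or_hops (hGH : G ≤ H) (h : zForceValid H S u w) (hS : S ⊆ blue) :
    (G.Adj u w ∧ ∀ x, G.Adj u x → x ∉ blue → x = w) ∨ ∀ x, G.Adj u x → x ∈ blue := by
  by_cases huw : G.Adj u w
  · exact Or.inl ⟨huw, fun x hx hxb => h.2.2.2 x (hGH hx) fun hxS => hxb (hS hxS)⟩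
  · refine Or.inr fun x hx => ?_
    by_contra hxb
    exact huw (h.2.2.2 x (hGH hx) (fun hxS => hxb (hS hxS)) ▸ hx)

end ForcingRules

lemma _root_.Monotone.lt_of_mem_of_notMem {T : ℕ → Set α} (hT : Monotone T) {x : α}
    {r s : ℕ} (hs : x ∈ T s) (hr : x ∉ T r) : r < s :=
  lt_of_not_ge fun h => hr (hT h hs)

section ForceLists

variable {G H : SimpleGraph V} {blue forced : Set V} {L M : List (V × V)}

lemma endBlue_cons (blue : Set V) (p : V × V) (L : List (V × V)) :
    endBlue blue (p :: L) = endBlue (insert p.2 blue) L := by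
  ext x
  simp only [endBlue, Set.mem_union, Set.mem_insert_iff, Set.mem_ofPred_eq, List.mem_cons,
    Prod.ext_iff]
  grind

lemma union_endForced_cons (forced : Set V) (p : V × V) (L : List (V × V)) :
    forced ∪ endForced (p :: L) = insert p.1 forced ∪ endForced L := by
  ext x
  simp only [endForced, Set.mem_union, Set.mem_insert_iff, Set.mem_ofPred_eq, List.mem_cons,
    Prod.ext_iff]
  grind

lemma endBlue_append (blue : Set V) (L M : List (V × V)) :
    endBlue blue (L ++ M) = endBlue (endBlue blue L) M := by
  ext x
  simp only [endBlue, Set.mem_union, Set.mem_ofPred_eq, List.mem_append]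
  grind

lemma endBlue_map (blue : Set V) (f : V → V) (ws : List V) :
    endBlue blue (ws.map fun w => (f w, w)) = blue ∪ {w | w ∈ ws} := by
  ext x
  simp [endBlue]

lemma zfValidList_append :
    zfValidList G blue forced (L ++ M) ↔
      zfValidList G blue forced L ∧
        zfValidList G (endBlue blue L) (forced ∪ endForced L) M := by
  induction L generalizing blue forced with
  | nil => simp [zfValidList, endBlue, endForced]
  | cons p L ih => simp only [List.cons_append, zfValidList, ih, endBlue_cons,
      union_endForced_cons, and_assoc]

lemma zfValidList.snd_notMem (h : zfValidList G blue forced L) {p : V × V} (hp : p ∈ L) :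
    p.2 ∉ blue := by
  induction L generalizing blue forced with
  | nil => simp at hp
  | cons q L ih =>
    rcases List.mem_cons.1 hp with rfl | hp
    · exact h.1.2.1
    · exact fun hb => ih h.2 hp (Set.mem_insert_of_mem _ hb)

lemma zfValidList.fst_notMem (h : zfValidList G blue forced L) {p : V × V} (hp : p ∈ L) :
    p.1 ∉ forced := by
  induction L generalizing blue forced with
  | nil => simp at hp
  | cons q L ih =>
    rcases List.mem_cons.1 hp with rfl | hp
    · exact h.1.2.2.1
    · exact fun hf => ih h.2 hp (Set.mem_insert_of_mem _ hf)

lemma zfValidList.nodup_map_fst (h : zfValidList G blue forced L) : (L.map Prod.fst).Nodup := by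
  induction L generalizing blue forced with
  | nil => exact List.nodup_nil
  | cons p L ih =>
    refine List.nodup_cons.2 ⟨fun hp => ?_, ih h.2⟩
    obtain ⟨q, hq, hqp⟩ := List.mem_map.1 hp
    exact h.2.fst_notMem hq (hqp ▸ Set.mem_insert _ _)

lemma zfValidList.nodup_map_snd (h : zfValidList G blue forced L) : (L.map Prod.snd).Nodup := by
  induction L generalizing blue forced with
  | nil => exact List.nodup_nil
  | cons p L ih =>
    refine List.nodup_cons.2 ⟨fun hp => ?_, ih h.2⟩
    obtain ⟨q, hq, hqp⟩ := List.mem_map.1 hp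
    exact h.2.snd_notMem hq (hqp ▸ Set.mem_insert _ _)

lemma zfValidList.injOn_fst (h : zfValidList G blue forced L) :
    Set.InjOn Prod.fst {p | p ∈ L} :=
  fun _ hp _ hq => List.inj_on_of_nodup_map h.nodup_map_fst hp hq

lemma zfValidList.injOn_snd (h : zfValidList G blue forced L) :
    Set.InjOn Prod.snd {p | p ∈ L} :=
  fun _ hp _ hq => List.inj_on_of_nodup_map h.nodup_map_snd hp hq

lemma zfValidList_map_of_zForceValid (hGH : G ≤ H) {S : Set V} {f : V → V} :
    ∀ {ws : List V} {blue forced : Set V}, ws.Nodup → S ⊆ blue →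
      (∀ w ∈ ws, zForceValid H S (f w) w ∧ w ∉ blue ∧ f w ∉ forced) →
      zfValidList G blue forced (ws.map fun w => (f w, w))
  | [], _, _, _, _, _ => trivial
  | w :: ws, blue, forced, hnd, hS, hws => by
    obtain ⟨hw, hwb, hfw⟩ := hws w List.mem_cons_self
    refine ⟨⟨hS hw.1, hwb, hfw, hw.forces_or_hops hGH hS⟩,
      zfValidList_map_of_zForceValid hGH (List.nodup_cons.1 hnd).2
        (hS.trans (Set.subset_insert _ _)) fun w' hw' => ?_⟩
    obtain ⟨hw'v, hw'b, hfw'⟩ := hws w' (List.mem_cons_of_mem _ hw')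
    have hne : w' ≠ w := fun h => (List.nodup_cons.1 hnd).1 (h ▸ hw')
    refine ⟨hw'v, by simp [hne, hw'b], ?_⟩
    simp only [Set.mem_insert_iff, not_or]
    -- forcers are distinct: `f w` is adjacent to the white vertex `w'`, so `w' = w`
    exact ⟨fun h => hne (hw.2.2.2 w' (h ▸ hw'v.2.2.1) hw'v.2.1), hfw'⟩

end ForceLists

section SupergraphOfForces

variable {G : SimpleGraph V} {F : Set (V × V)} {B : Set V}

def withForceEdges (G : SimpleGraph V) (F : Set (V × V)) : SimpleGraph V :=
  G ⊔ fromEdgeSet ((fun p => s(p.1, p.2)) '' F)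

lemma zfBlueAt_mono (G : SimpleGraph V) (F : Set (V × V)) (B : Set V) :
    Monotone (zfBlueAt G F B) :=
  monotone_nat_of_le_succ fun _ => Set.subset_union_left

lemma exists_forcer_mem_zfBlueAt {v : V} (hvB : v ∉ B) :
    ∀ {s : ℕ}, v ∈ zfBlueAt G F B s → ∃ x, (x, v) ∈ F ∧ x ∈ zfBlueAt G F B s
  | 0, hv => absurd hv hvB
  | s + 1, Or.inl hv =>
    let ⟨x, hxv, hx⟩ := exists_forcer_mem_zfBlueAt hvB hv
    ⟨x, hxv, zfBlueAt_mono G F B s.le_succ hx⟩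
  | _ + 1, Or.inr ⟨x, hxv, hx, _⟩ => ⟨x, hxv, Or.inl hx⟩

lemma zfBlueAt_succ_subset_zStep (hB : ∀ p ∈ F, p.2 ∉ B) (hfst : Set.InjOn Prod.fst F)
    (hsnd : Set.InjOn Prod.snd F) (s : ℕ) :
    zfBlueAt G F B (s + 1) ⊆ zStep (withForceEdges G F) (zfBlueAt G F B s) := by
  rintro w (hw | ⟨v, hvw, hv, hw, -, hrule⟩)
  · exact Or.inl hw
  refine Or.inr ⟨v, hv, ?_, fun x hx hxS => ?_⟩
  · rcases hrule with ⟨hadj, -⟩ | -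
    · exact Or.inl hadj
    · exact Or.inr ((fromEdgeSet_adj _).2 ⟨⟨_, hvw, rfl⟩, fun h => hw (h ▸ hv)⟩)
  rcases hx with hx | hx
  · rcases hrule with ⟨-, huniq⟩ | hall
    · exact huniq x hx hxS
    · exact absurd (hall x hx) hxS
  obtain ⟨⟨⟨a, b⟩, hab, he⟩, -⟩ := (fromEdgeSet_adj _).1 hx
  rcases Sym2.eq_iff.1 he with ⟨rfl, rfl⟩ | ⟨rfl, rfl⟩
  · exact congrArg Prod.snd (hfst hab hvw rfl)
  · -- `x` forced `v`, so it was blue when `v` became blue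
    obtain ⟨y, hyv, hy⟩ := exists_forcer_mem_zfBlueAt (hB _ hab) hv
    exact absurd (congrArg Prod.fst (hsnd hyv hab rfl) ▸ hy) hxS

lemma zfBlueAt_subset_zStep_iterate (hB : ∀ p ∈ F, p.2 ∉ B) (hfst : Set.InjOn Prod.fst F)
    (hsnd : Set.InjOn Prod.snd F) :
    ∀ s, zfBlueAt G F B s ⊆ (zStep (withForceEdges G F))^[s] B
  | 0 => subset_rfl
  | s + 1 => by
    rw [Function.iterate_succ_apply']
    exact (zfBlueAt_succ_subset_zStep hB hfst hsnd s).trans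
      (zStep_mono _ (zfBlueAt_subset_zStep_iterate hB hfst hsnd s))

end SupergraphOfForces

section ForcesOfSupergraph

variable {G H : SimpleGraph V} {B : Set V}

lemma exists_zfValidList_endBlue_eq_zStep_iterate [Finite V] (hGH : G ≤ H) (B : Set V) :
    ∀ s : ℕ, ∃ L : List (V × V), zfValidList G B ∅ L ∧ endBlue B L = (zStep H)^[s] B ∧
      ∀ p ∈ L, ∃ r, zForceValid H ((zStep H)^[r] B) p.1 p.2
  | 0 => ⟨[], trivial, by simp [endBlue], by simp⟩
  | s + 1 => by
    obtain ⟨L, hL, hLs, hLr⟩ := exists_zfValidList_endBlue_eq_zStep_iterate hGH B s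
    have hTmono := monotone_zStep_iterate H B
    rw [Function.iterate_succ_apply']
    set N := zStep H ((zStep H)^[s] B) \ (zStep H)^[s] B with hN
    have hforcer : ∀ w ∈ N, ∃ u, zForceValid H ((zStep H)^[s] B) u w := fun w hw =>
      exists_zForceValid_of_mem_zStep hw.1 hw.2
    choose! f hf using hforcer
    obtain ⟨ws, hws_nd, hws⟩ : ∃ ws : List V, ws.Nodup ∧ {w | w ∈ ws} = N :=
      ⟨(Set.toFinite N).toFinset.toList, Finset.nodup_toList _, by ext; simp⟩
    have hsat : ∀ p ∈ L, ∀ x, H.Adj p.1 x → x ∈ (zStep H)^[s] B := by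
      intro p hp x hx
      obtain ⟨r, hr⟩ := hLr p hp
      have hp2 : p.2 ∈ (zStep H)^[s] B := hLs ▸ Or.inr ⟨p.1, hp⟩
      rcases hr.adj_mem_insert hx with rfl | hxr
      · exact hp2
      · exact hTmono (hTmono.lt_of_mem_of_notMem hp2 hr.2.1).le hxr
    refine ⟨L ++ ws.map fun w => (f w, w), zfValidList_append.2 ⟨hL,
      zfValidList_map_of_zForceValid hGH hws_nd hLs.ge fun w hw => ?_⟩, ?_, ?_⟩
    · have hw' : w ∈ N := hws ▸ hw
      refine ⟨hf w hw', hLs ▸ hw'.2, fun hfw => ?_⟩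
      obtain ⟨w', hwL⟩ := hfw.resolve_left id
      exact hw'.2 (hsat _ hwL w (hf w hw').2.2.1)
    · rw [endBlue_append, hLs, endBlue_map, hws, hN]
      exact Set.union_sdiff_cancel Set.subset_union_left
    · simp only [List.mem_append, List.mem_map]
      rintro p (hp | ⟨w, hw, rfl⟩)
      · exact hLr p hp
      · exact ⟨s, hf w (hws ▸ hw)⟩

lemma zStep_iterate_subset_zfBlueAt {F : Set (V × V)} (hGH : G ≤ H)
    (hfst : Set.InjOn Prod.fst F) (hcover : ∀ w ∉ B, ∃ v, (v, w) ∈ F)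
    (hF : ∀ p ∈ F, ∃ r, zForceValid H ((zStep H)^[r] B) p.1 p.2) :
    ∀ s, (zStep H)^[s] B ⊆ zfBlueAt G F B s
  | 0 => subset_rfl
  | s + 1 => by
    have ih := zStep_iterate_subset_zfBlueAt hGH hfst hcover hF s
    have hTmono := monotone_zStep_iterate H B
    intro w hw
    by_cases hws : w ∈ zfBlueAt G F B s
    · exact Or.inl hws
    have hwT : w ∉ (zStep H)^[s] B := fun h => hws (ih h)
    obtain ⟨v, hvw⟩ := hcover w fun hwB => hwT (hTmono s.zero_le hwB)
    obtain ⟨r, hr⟩ := hF _ hvw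
    -- `w` turns blue in `H` both in round `r + 1` and in round `s + 1`
    obtain rfl : r = s := le_antisymm (Nat.lt_succ_iff.1 (hTmono.lt_of_mem_of_notMem hw hr.2.1))
      (Nat.lt_succ_iff.1 (hTmono.lt_of_mem_of_notMem
        (by rw [Function.iterate_succ_apply']; exact hr.mem_zStep) hwT))
    refine Or.inr ⟨v, hvw, ih hr.1, hws, fun w' hw' hw's => ?_, hr.forces_or_hops hGH ih⟩
    obtain rfl : w' = w := congrArg Prod.snd (hfst hw' hvw rfl)
    exact absurd hw's hws

lemma exists_isZFForceSet_zfBlueAt_eq_univ [Finite V] (hGH : G ≤ H) {t : ℕ}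
    (ht : (zStep H)^[t] B = Set.univ) :
    ∃ F, IsZFForceSet G B F ∧ zfBlueAt G F B t = Set.univ := by
  obtain ⟨L, hL, hLt, hLr⟩ := exists_zfValidList_endBlue_eq_zStep_iterate hGH B t
  rw [ht] at hLt
  refine ⟨{p | p ∈ L}, ⟨L, hL, fun u w h => h.2.1 (hLt ▸ Set.mem_univ w), rfl⟩,
    Set.eq_univ_of_univ_subset (ht ▸ zStep_iterate_subset_zfBlueAt hGH hL.injOn_fst ?_ hLr t)⟩
  intro w hwB
  have hw : w ∈ endBlue B L := hLt ▸ Set.mem_univ w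
  exact hw.resolve_left hwB

end ForcesOfSupergraph

lemma _root_.ENat.sInf_mem_of_ne_top {S : Set ℕ∞} (h : sInf S ≠ ⊤) : sInf S ∈ S :=
  csInf_mem (Set.nonempty_iff_ne_empty.2 fun hS => h (hS ▸ sInf_empty))

lemma ptZF_le_ptZ [Finite V] {G H : SimpleGraph V} (hGH : G ≤ H) (B : Set V) :
    ptZF G B ≤ ptZ H B := by
  refine le_sInf ?_
  rintro _ ⟨t, rfl, ht⟩
  obtain ⟨F, hF, hFt⟩ := exists_isZFForceSet_zfBlueAt_eq_univ hGH ht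
  calc ptZF G B ≤ ptZFofF G F B := sInf_le ⟨F, hF, rfl⟩
    _ ≤ t := sInf_le ⟨t, rfl, hFt⟩

lemma exists_le_ptZ_le_ptZF (G : SimpleGraph V) (B : Set V) :
    ∃ H, G ≤ H ∧ ptZ H B ≤ ptZF G B := by
  by_cases htop : ptZF G B = ⊤
  · exact ⟨G, le_rfl, htop ▸ le_top⟩
  have hF : ptZF G B ∈ {n | ∃ F, IsZFForceSet G B F ∧ n = ptZFofF G F B} :=
    ENat.sInf_mem_of_ne_top htop
  obtain ⟨F, ⟨L, hL, -, rfl⟩, hFeq⟩ := hF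
  have ht : ptZFofF G {p | p ∈ L} B ∈
      {n : ℕ∞ | ∃ t : ℕ, n = t ∧ zfBlueAt G {p | p ∈ L} B t = Set.univ} :=
    ENat.sInf_mem_of_ne_top (by rwa [← ptZFofF, ← hFeq])
  obtain ⟨t, ht_eq, ht⟩ := ht
  refine ⟨withForceEdges G {p | p ∈ L}, le_sup_left, ?_⟩
  rw [hFeq, ht_eq]
  refine sInf_le ⟨t, rfl, ?_⟩
  exact Set.eq_univ_of_univ_subset (ht ▸ zfBlueAt_subset_zStep_iterate
    (fun _ => hL.snd_notMem) hL.injOn_fst hL.injOn_snd t)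

/-- `th_⌊Z⌋(G;B) = min{ th_Z(H;B) : H a spanning supergraph of G }`. -/
theorem stmt2 {V : Type*} [Fintype V] (G : SimpleGraph V) (B : Set V) :
    thZF G B = sInf {n : ℕ∞ | ∃ H : SimpleGraph V, G ≤ H ∧ n = thZ H B} := by
  refine le_antisymm (le_sInf ?_) ?_
  · rintro _ ⟨H, hGH, rfl⟩
    exact add_le_add le_rfl (ptZF_le_ptZ hGH B)
  · obtain ⟨H, hGH, hH⟩ := exists_le_ptZ_le_ptZF G B
    exact sInf_le_of_le ⟨H, hGH, rfl⟩ (add_le_add le_rfl hH)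

end ZFT
end

section
/- If G is a finite simple graph of order n with th_⌊Z⌋(G) = n, then the independence number of G satisfies α(G) ≤ 3. -/
open SimpleGraph

namespace ZFT

variable {V : Type*} {α : Type*} {β : Type*}

/-! Hopping from two vertices `a`, `b` into two white vertices `c`, `d` that neither of them
sees colors the whole graph in one step, so `th_⌊Z⌋(G) ≤ (n - 2) + 1`. An independent set of
size four supplies such vertices. -/

section TwoHops

variable {G : SimpleGraph V}

theorem isZFForceSet_of_endBlue_eq_univ {B : Set V} {L : List (V × V)}
    (hL : zfValidList G B ∅ L) (hend : endBlue B L = Set.univ) :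
    IsZFForceSet G B {p | p ∈ L} :=
  ⟨L, hL, fun _ w hw => hw.2.1 (hend ▸ Set.mem_univ w), rfl⟩

theorem ptZF_le_of_zfBlueAt_eq_univ {B : Set V} {F : Set (V × V)} {t : ℕ}
    (hF : IsZFForceSet G B F) (ht : zfBlueAt G F B t = Set.univ) : ptZF G B ≤ t :=
  sInf_le_of_le (b := ptZFofF G F B) ⟨F, hF, rfl⟩ (sInf_le ⟨t, rfl, ht⟩)

variable {a b c d : V}

theorem mem_compl_pair_of_adj (hac : Gᶜ.Adj a c) (had : Gᶜ.Adj a d) {x : V} (hx : G.Adj a x) :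
    x ∈ ({c, d} : Set V)ᶜ := by
  rintro (rfl | rfl)
  exacts [hac.2 hx, had.2 hx]

theorem endBlue_compl_pair : endBlue ({c, d}ᶜ : Set V) [(a, c), (b, d)] = Set.univ := by
  refine Set.eq_univ_of_forall fun x => ?_
  by_cases hx : x ∈ ({c, d} : Set V)
  · right
    rcases hx with rfl | rfl
    exacts [⟨a, by simp⟩, ⟨b, by simp⟩]
  · exact Or.inl hx

theorem zfValidList_two_hops (hab : a ≠ b) (hcd : c ≠ d) (hac : Gᶜ.Adj a c)
    (had : Gᶜ.Adj a d) (hbc : Gᶜ.Adj b c) (hbd : Gᶜ.Adj b d) :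
    zfValidList G ({c, d}ᶜ : Set V) ∅ [(a, c), (b, d)] := by
  have haB : a ∈ ({c, d}ᶜ : Set V) := by simp [hac.ne, had.ne]
  have hbB : b ∈ ({c, d}ᶜ : Set V) := by simp [hbc.ne, hbd.ne]
  refine ⟨⟨haB, by simp, Set.notMem_empty a, Or.inr fun x hx => mem_compl_pair_of_adj hac had hx⟩,
    ⟨Set.mem_insert_of_mem c hbB, by simp [hcd.symm], by simpa using hab.symm,
      Or.inr fun x hx => Set.mem_insert_of_mem c (mem_compl_pair_of_adj hbc hbd hx)⟩, trivial⟩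

theorem zfBlueAt_one_of_two_hops (hac : Gᶜ.Adj a c) (had : Gᶜ.Adj a d) (hbc : Gᶜ.Adj b c)
    (hbd : Gᶜ.Adj b d) :
    zfBlueAt G {p | p ∈ [(a, c), (b, d)]} ({c, d}ᶜ : Set V) 1 = Set.univ := by
  refine Set.eq_univ_of_forall fun x => ?_
  simp only [zfBlueAt]
  by_cases hx : x ∈ ({c, d} : Set V)
  · right
    rcases hx with rfl | rfl
    · exact ⟨a, by simp, by simp [hac.ne, had.ne], by simp, fun _ _ hw => hw,
        Or.inr fun y hy => mem_compl_pair_of_adj hac had hy⟩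
    · exact ⟨b, by simp, by simp [hbc.ne, hbd.ne], by simp, fun _ _ hw => hw,
        Or.inr fun y hy => mem_compl_pair_of_adj hbc hbd hy⟩
  · exact Or.inl hx

theorem thZFgraph_lt_card [Fintype V] (hab : a ≠ b) (hcd : c ≠ d) (hac : Gᶜ.Adj a c)
    (had : Gᶜ.Adj a d) (hbc : Gᶜ.Adj b c) (hbd : Gᶜ.Adj b d) :
    thZFgraph G < Fintype.card V := by
  have hpt : ptZF G ({c, d}ᶜ : Set V) ≤ 1 := by
    simpa using ptZF_le_of_zfBlueAt_eq_univ
      (isZFForceSet_of_endBlue_eq_univ (zfValidList_two_hops hab hcd hac had hbc hbd)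
        endBlue_compl_pair)
      (zfBlueAt_one_of_two_hops hac had hbc hbd)
  have hcard : ({c, d}ᶜ : Set V).ncard + 2 = Fintype.card V := by
    rw [← Set.ncard_pair hcd, Set.ncard_compl_add_ncard, Nat.card_eq_fintype_card]
  calc thZFgraph G ≤ thZF G ({c, d}ᶜ : Set V) := sInf_le ⟨_, rfl⟩
    _ ≤ ({c, d}ᶜ : Set V).ncard + 1 := by rw [thZF]; gcongr
    _ < Fintype.card V := by rw [← hcard]; norm_cast; omega

end TwoHops

theorem exists_indep_ncard_eq_indepNum [Finite V] (G : SimpleGraph V) :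
    ∃ s : Set V, (∀ a ∈ s, ∀ b ∈ s, a ≠ b → ¬ G.Adj a b) ∧ s.ncard = indepNum G :=
  Nat.sSup_mem (s := {k | ∃ s : Set V, (∀ a ∈ s, ∀ b ∈ s, a ≠ b → ¬ G.Adj a b) ∧ s.ncard = k})
    ⟨0, ∅, by simp, by simp⟩ ⟨Nat.card V, by rintro _ ⟨s, -, rfl⟩; exact Set.ncard_le_card s⟩

/-- if `th_⌊Z⌋(G) = n` (the order of `G`), then `α(G) ≤ 3`. -/
theorem stmt18 {V : Type*} [Fintype V] (G : SimpleGraph V)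
    (h : thZFgraph G = (Fintype.card V : ℕ∞)) :
    indepNum G ≤ 3 := by
  by_contra! hlt
  obtain ⟨s, hs, hcard⟩ := exists_indep_ncard_eq_indepNum G
  have hGc : ∀ x ∈ s, ∀ y ∈ s, x ≠ y → Gᶜ.Adj x y := fun x hx y hy hxy => ⟨hxy, hs x hx y hy hxy⟩
  obtain ⟨a, ha⟩ : s.Nonempty := Set.nonempty_of_ncard_ne_zero (by omega)
  obtain ⟨b, c, d, hb, hc, hd, hbc, hbd, hcd⟩ := (Set.two_lt_ncard_iff (Set.toFinite _)).1 <| by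
    rw [Set.ncard_sdiff_singleton_of_mem ha]; omega
  refine (thZFgraph_lt_card (Ne.symm hb.2) hcd ?_ ?_ (hGc b hb.1 c hc.1 hbc)
    (hGc b hb.1 d hd.1 hbd)).ne h
  exacts [hGc a ha c hc.1 (Ne.symm hc.2), hGc a ha d hd.1 (Ne.symm hd.2)]

end ZFT
end
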